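/- arXiv:2307.05897 — 2 statements merged into one kernel-verified Lean document; each statement's English description precedes it below -/
import Mathlib

section
/- Let D be a strongly connected digraph, Z₁, Z₂ ⊆ A(D), and let (L₀, L₁, …, L_p) be an out-leveling (or an in-leveling) of D. Then there exists an index i ∈ {0,1,…,p} and a strong component H of D[L_i] such that μ(H,Z₁,Z₂) ≥ ⌈ μ(D,Z₁,Z₂)/2 ⌉. -/
variable {V : Type}

/-- The arcs of a directed cycle given by its (cyclic) vertex list. -/
def cycleArcs (vs : List V) : List (V × V) := vs.zip (vs.rotate 1)

/-- The arcs of a directed path given by its vertex list. -/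
def pathArcs (vs : List V) : List (V × V) := vs.zip vs.tail

/-- `vs` is the vertex list of a directed cycle in the digraph `D`. -/
def IsDicycle (D : V → V → Prop) (vs : List V) : Prop :=
  vs ≠ [] ∧ vs.Nodup ∧ ∀ p ∈ cycleArcs vs, D p.1 p.2

/-- The number of (distinct) arcs of `l` that lie in `Z`. -/
noncomputable def arcCount (l : List (V × V)) (Z : Set (V × V)) : ℕ :=
  Nat.card {a : V × V // a ∈ l ∧ a ∈ Z}

/-- The directed cycle `vs` is `(Z1, Z2)`-unbalanced. -/
def Unbalanced (Z1 Z2 : Set (V × V)) (vs : List V) : Prop :=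
  arcCount (cycleArcs vs) Z1 ≠ arcCount (cycleArcs vs) Z2

/-- The induced subdigraph `D[S]` contains no `(Z1,Z2)`-unbalanced directed cycle. -/
def NoUnbCycle (D : V → V → Prop) (Z1 Z2 : Set (V × V)) (S : Set V) : Prop :=
  ∀ vs : List V, IsDicycle D vs → (∀ v ∈ vs, v ∈ S) → ¬ Unbalanced Z1 Z2 vs

/-- `mu D Z1 Z2 S` is the `(Z1,Z2)`-unbalanced dichromatic number of the induced
subdigraph `D[S]`: the least number of parts of a partition of `S` each of whose
parts induces no `(Z1,Z2)`-unbalanced directed cycle. -/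
noncomputable def mu (D : V → V → Prop) (Z1 Z2 : Set (V × V)) (S : Set V) : ℕ :=
  sInf {k | ∃ c : V → Fin k, ∀ i : Fin k, NoUnbCycle D Z1 Z2 (S ∩ {v | c v = i})}

/-- The adjacency relation of the induced subdigraph `D[S]`. -/
def inducedRel (D : V → V → Prop) (S : Set V) : V → V → Prop :=
  fun u v => D u v ∧ u ∈ S ∧ v ∈ S

/-- The induced subdigraph `D[S]` is strongly connected. -/
def StronglyConnectedOn (D : V → V → Prop) (S : Set V) : Prop :=
  ∀ u ∈ S, ∀ v ∈ S, Relation.ReflTransGen (inducedRel D S) u v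

/-- `H` is (the vertex set of) a strong component of the induced subdigraph `D[S]`. -/
def IsStrongComponent (D : V → V → Prop) (S H : Set V) : Prop :=
  H ⊆ S ∧ H.Nonempty ∧ StronglyConnectedOn D H ∧
    ∀ H', H ⊆ H' → H' ⊆ S → StronglyConnectedOn D H' → H' = H

/-- `vs` is the vertex list of a directed path in `D`. -/
def IsDipath (D : V → V → Prop) (vs : List V) : Prop :=
  vs.Nodup ∧ vs.Chain' D

/-- `vs` is a directed path in `D` from `x` to `y`. -/
def IsDipathFromTo (D : V → V → Prop) (vs : List V) (x y : V) : Prop :=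
  IsDipath D vs ∧ vs.head? = some x ∧ vs.getLast? = some y

/-- The internal vertices of a path given by its vertex list. -/
def internalVerts (vs : List V) : List V := vs.tail.dropLast

/-- `vs` is a directed `X`-path in `D` from `x` to `y`: a directed path whose two
endpoints are distinct vertices of `X` and whose internal vertices avoid `X`. -/
def IsXPath (D : V → V → Prop) (X : Set V) (vs : List V) (x y : V) : Prop :=
  IsDipathFromTo D vs x y ∧ x ∈ X ∧ y ∈ X ∧ x ≠ y ∧ ∀ v ∈ internalVerts vs, v ∉ X

/-- `(L 0, …, L p)` is an out-leveling of `D`: disjoint sets, `L 0` a singleton, covering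
`V(D)`, and every vertex of `L i` (`i ∈ [p]`) has an in-neighbor in `L (i-1)` and no
in-neighbor in `L j` for `j ≤ i - 2`. -/
def IsOutLeveling (D : V → V → Prop) (L : ℕ → Set V) (p : ℕ) : Prop :=
  (∀ i j, i ≠ j → Disjoint (L i) (L j)) ∧
  (∃ v : V, L 0 = {v}) ∧
  (⋃ i ∈ Set.Iic p, L i) = Set.univ ∧
  (∀ i, p < i → L i = ∅) ∧
  ∀ i, 1 ≤ i → i ≤ p → ∀ v ∈ L i,
    (∃ u ∈ L (i - 1), D u v) ∧ ∀ j, j + 2 ≤ i → ∀ u ∈ L j, ¬ D u v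

/-- `(L 0, …, L p)` is an in-leveling of `D`: as an out-leveling, but with out-neighbors. -/
def IsInLeveling (D : V → V → Prop) (L : ℕ → Set V) (p : ℕ) : Prop :=
  (∀ i j, i ≠ j → Disjoint (L i) (L j)) ∧
  (∃ v : V, L 0 = {v}) ∧
  (⋃ i ∈ Set.Iic p, L i) = Set.univ ∧
  (∀ i, p < i → L i = ∅) ∧
  ∀ i, 1 ≤ i → i ≤ p → ∀ v ∈ L i,
    (∃ u ∈ L (i - 1), D v u) ∧ ∀ j, j + 2 ≤ i → ∀ u ∈ L j, ¬ D v u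
-- ############ auxiliary lemmas ############


def muSet (D : V → V → Prop) (Z1 Z2 : Set (V × V)) (S : Set V) : Set ℕ :=
  {k | ∃ c : V → Fin k, ∀ i : Fin k, NoUnbCycle D Z1 Z2 (S ∩ {v | c v = i})}

lemma mu_eq (D : V → V → Prop) (Z1 Z2 : Set (V × V)) (S : Set V) :
    mu D Z1 Z2 S = sInf (muSet D Z1 Z2 S) := rfl

lemma muSet_elim {D : V → V → Prop} {Z1 Z2 : Set (V × V)} {S : Set V} {k : ℕ}
    (h : k ∈ muSet D Z1 Z2 S) :
    ∃ c : V → Fin k, ∀ i : Fin k, NoUnbCycle D Z1 Z2 (S ∩ {v | c v = i}) := h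

lemma noUnb_mono (D : V → V → Prop) (Z1 Z2 : Set (V × V)) {S S' : Set V} (h : S' ⊆ S)
    (hS : NoUnbCycle D Z1 Z2 S) : NoUnbCycle D Z1 Z2 S' :=
  fun vs hc hm => hS vs hc (fun v hv => h (hm v hv))

lemma muSet_mono (D : V → V → Prop) (Z1 Z2 : Set (V × V)) {S S' : Set V} (h : S' ⊆ S) {k : ℕ}
    (hk : k ∈ muSet D Z1 Z2 S) : k ∈ muSet D Z1 Z2 S' := by
  obtain ⟨c, hc⟩ := hk
  exact ⟨c, fun i => noUnb_mono D Z1 Z2 (Set.inter_subset_inter h (le_refl _)) (hc i)⟩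

lemma muSet_upclosed (D : V → V → Prop) (Z1 Z2 : Set (V × V)) {S : Set V} {k k' : ℕ}
    (hk : k ∈ muSet D Z1 Z2 S) (hkk : k ≤ k') : k' ∈ muSet D Z1 Z2 S := by
  obtain ⟨c, hc⟩ := hk
  refine ⟨fun v => Fin.castLE hkk (c v), fun i => ?_⟩
  by_cases hik : (i : ℕ) < k
  · have hset : S ∩ {v | Fin.castLE hkk (c v) = i} = S ∩ {v | c v = ⟨i, hik⟩} := by
      ext v; simp [Fin.ext_iff]
    rw [hset]; exact hc _
  · intro vs hcyc hmem
    obtain ⟨v, hv⟩ := List.exists_mem_of_ne_nil vs hcyc.1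
    have hv2 : Fin.castLE hkk (c v) = i := (hmem v hv).2
    exact absurd (show (i : ℕ) < k by rw [← hv2]; exact (c v).isLt) hik

lemma mu_pos (D : V → V → Prop) (Z1 Z2 : Set (V × V)) (hV : Nonempty V) {S : Set V}
    (hne : (muSet D Z1 Z2 S).Nonempty) : 1 ≤ mu D Z1 Z2 S := by
  rcases Nat.eq_zero_or_pos (mu D Z1 Z2 S) with h0 | h1
  · have hm : mu D Z1 Z2 S ∈ muSet D Z1 Z2 S := Nat.sInf_mem hne
    rw [h0] at hm
    obtain ⟨c, -⟩ := hm
    exact (c hV.some).elim0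
  · exact h1

def compSet (D : V → V → Prop) (S : Set V) (v : V) : Set V :=
  {w | Relation.ReflTransGen (inducedRel D S) v w ∧ Relation.ReflTransGen (inducedRel D S) w v}

lemma mem_compSet_self (D : V → V → Prop) (S : Set V) (v : V) : v ∈ compSet D S v :=
  ⟨.refl, .refl⟩

lemma reach_mem_right (D : V → V → Prop) {S : Set V} {a b : V}
    (h : Relation.ReflTransGen (inducedRel D S) a b) (ha : a ∈ S) : b ∈ S := by
  induction h with
  | refl => exact ha
  | tail _ h2 _ => exact h2.2.2

lemma compSet_eq (D : V → V → Prop) (S : Set V) {u w : V}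
    (h1 : Relation.ReflTransGen (inducedRel D S) u w)
    (h2 : Relation.ReflTransGen (inducedRel D S) w u) :
    compSet D S u = compSet D S w := by
  ext x
  constructor
  · rintro ⟨hux, hxu⟩; exact ⟨h2.trans hux, hxu.trans h1⟩
  · rintro ⟨hwx, hxw⟩; exact ⟨h1.trans hwx, hxw.trans h2⟩

lemma compSet_strong (D : V → V → Prop) (S : Set V) (v : V) (hv : v ∈ S) :
    IsStrongComponent D S (compSet D S v) := by
  set R := Relation.ReflTransGen (inducedRel D S) with hR
  set H := compSet D S v with hH
  have hsub : H ⊆ S := fun w hw => reach_mem_right D hw.1 hv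
  have hA : ∀ u, R v u → R u v → Relation.ReflTransGen (inducedRel D H) v u := by
    intro u h
    induction h with
    | refl => intro _; exact .refl
    | @tail b c hvb hbc ih =>
      intro hcv
      have hbv : R b v := .head hbc hcv
      exact (ih hbv).tail ⟨hbc.1, ⟨hvb, hbv⟩, ⟨hvb.tail hbc, hcv⟩⟩
  have hB : ∀ u, R u v → R v u → Relation.ReflTransGen (inducedRel D H) u v := by
    intro u h
    induction h using Relation.ReflTransGen.head_induction_on with
    | refl => intro _; exact .refl
    | @head a b hab hbv ih =>
      intro hva
      exact .head ⟨hab.1, ⟨hva, .head hab hbv⟩, ⟨hva.tail hab, hbv⟩⟩ (ih (hva.tail hab))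
  refine ⟨hsub, ⟨v, mem_compSet_self D S v⟩, ?_, ?_⟩
  · intro u hu w hw
    exact (hB u hu.2 hu.1).trans (hA w hw.1 hw.2)
  · intro H' hHH' hH'S hsc'
    apply Set.Subset.antisymm _ hHH'
    intro u hu
    have hmono : ∀ {a b : V}, Relation.ReflTransGen (inducedRel D H') a b → R a b :=
      fun h => Relation.ReflTransGen.mono (r := inducedRel D H') (p := inducedRel D S) (fun x y (hxy : inducedRel D H' x y) => (⟨hxy.1, hH'S hxy.2.1, hH'S hxy.2.2⟩ : inducedRel D S x y)) _ _ h
    exact ⟨hmono (hsc' v (hHH' (mem_compSet_self D S v)) u hu),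
           hmono (hsc' u hu v (hHH' (mem_compSet_self D S v)))⟩

lemma cycle_rel {r : V → V → Prop} {vs : List V} (hrefl : ∀ a, r a a)
    (htrans : ∀ {a b c}, r a b → r b c → r a c)
    (h : ∀ k c (hk : k < vs.length) (hc : c < vs.length), (k + 1) % vs.length = c →
      r (vs[k]'hk) (vs[c]'hc)) :
    ∀ u ∈ vs, ∀ w ∈ vs, r u w := by
  intro u hu w hw
  have hn : 0 < vs.length := List.length_pos_iff.mpr (List.ne_nil_of_mem hu)
  obtain ⟨a, ha, rfl⟩ := List.mem_iff_getElem.mp hu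
  obtain ⟨b, hb, rfl⟩ := List.mem_iff_getElem.mp hw
  have key : ∀ t a c (ha : a < vs.length) (hc : c < vs.length),
      (a + t) % vs.length = c → r (vs[a]'ha) (vs[c]'hc) := by
    intro t
    induction t with
    | zero =>
      intro a c ha hc hac
      rw [Nat.add_zero, Nat.mod_eq_of_lt ha] at hac
      subst hac
      exact hrefl _
    | succ t ih =>
      intro a c ha hc hac
      have hd : (a + t) % vs.length < vs.length := Nat.mod_lt _ hn
      refine htrans (ih a _ ha hd rfl) (h _ c hd hc ?_)
      rw [Nat.mod_add_mod, ← hac, Nat.add_assoc]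
  have hfin : (a + (b + vs.length - a)) % vs.length = b := by
    have h1 : a + (b + vs.length - a) = b + vs.length := by omega
    rw [h1, Nat.add_mod_right, Nat.mod_eq_of_lt hb]
  exact key _ a b ha hb hfin

lemma cycleArcs_getElem (vs : List V) (k c : ℕ) (hk : k < vs.length) (hc : c < vs.length)
    (hkc : (k + 1) % vs.length = c) : ((vs[k]'hk, vs[c]'hc)) ∈ cycleArcs vs := by
  subst hkc
  have hlen : k < (vs.zip (vs.rotate 1)).length := by simpa using hk
  have hval : (vs.zip (vs.rotate 1))[k]'hlen = (vs[k]'hk, vs[(k + 1) % vs.length]'hc) := by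
    rw [List.getElem_zip, List.getElem_rotate]
  show _ ∈ vs.zip (vs.rotate 1)
  rw [← hval]
  exact List.getElem_mem hlen

open Classical in
noncomputable def pickCol (D : V → V → Prop) (Z1 Z2 : Set (V × V)) (m : ℕ) (hm : 0 < m)
    (S : Set V) : V → Fin m :=
  if h : m ∈ muSet D Z1 Z2 S then (muSet_elim h).choose else fun _ => ⟨0, hm⟩

lemma pickCol_spec (D : V → V → Prop) (Z1 Z2 : Set (V × V)) {m : ℕ} (hm : 0 < m) {S : Set V}
    (h : m ∈ muSet D Z1 Z2 S) (i : Fin m) :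
    NoUnbCycle D Z1 Z2 (S ∩ {w | pickCol D Z1 Z2 m hm S w = i}) := by
  simp only [pickCol, dif_pos h]
  exact (muSet_elim h).choose_spec i

/-- For an out-leveling (or in-leveling) `(L₀,…,L_p)` of a strongly connected
digraph `D`, some level has a strong component `H` with `μ(H,Z₁,Z₂) ≥ ⌈μ(D,Z₁,Z₂)/2⌉`. -/
theorem stmt3 [Fintype V] (D : V → V → Prop) (Z1 Z2 : Set (V × V)) (L : ℕ → Set V) (p : ℕ)
    (hsc : StronglyConnectedOn D Set.univ)
    (hlev : IsOutLeveling D L p ∨ IsInLeveling D L p) :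
    ∃ i ≤ p, ∃ H : Set V, IsStrongComponent D (L i) H ∧
      (mu D Z1 Z2 Set.univ + 1) / 2 ≤ mu D Z1 Z2 H := by
  classical
  set M := mu D Z1 Z2 Set.univ with hM
  have hmain : (∀ i j, i ≠ j → Disjoint (L i) (L j)) ∧ (∃ v : V, L 0 = {v}) ∧
      (⋃ i ∈ Set.Iic p, L i) = Set.univ ∧
      ((∀ u w lu lw, D u w → u ∈ L lu → w ∈ L lw → lu ≤ p → lw ≤ p → lw ≤ lu + 1) ∨
       (∀ u w lu lw, D u w → u ∈ L lu → w ∈ L lw → lu ≤ p → lw ≤ p → lu ≤ lw + 1)) := by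
    rcases hlev with ⟨h1, h2, h3, -, h5⟩ | ⟨h1, h2, h3, -, h5⟩
    · refine ⟨h1, h2, h3, Or.inl ?_⟩
      intro u w lu lw hD hu hw hlup hlwp
      by_contra hlt
      push_neg at hlt
      exact (h5 lw (by omega) hlwp w hw).2 lu (by omega) u hu hD
    · refine ⟨h1, h2, h3, Or.inr ?_⟩
      intro u w lu lw hD hu hw hlup hlwp
      by_contra hlt
      push_neg at hlt
      exact (h5 lu (by omega) hlup u hu).2 lw (by omega) w hw hD
  obtain ⟨hdis, ⟨v0, hL0⟩, hcov, hstep⟩ := hmain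
  have hlevel : ∀ v : V, ∃ i, i ≤ p ∧ v ∈ L i := by
    intro v
    have hv : v ∈ ⋃ i ∈ Set.Iic p, L i := by rw [hcov]; trivial
    simpa [Set.mem_iUnion, Set.mem_Iic] using hv
  choose lvl hlvlp hlvlm using hlevel
  rcases Nat.eq_zero_or_pos M with hM0 | hM1
  · refine ⟨0, Nat.zero_le p, L 0, ?_, by omega⟩
    rw [hL0]
    refine ⟨subset_rfl, ⟨v0, rfl⟩, ?_, fun H' h1 h2 _ => Set.Subset.antisymm h2 h1⟩
    intro u hu w hw
    rw [Set.mem_singleton_iff] at hu hw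
    subst hu; subst hw
    exact .refl
  by_contra hcon
  push_neg at hcon
  set m := (M + 1) / 2 - 1 with hm
  have hMne : (muSet D Z1 Z2 Set.univ).Nonempty := by
    by_contra hne
    rw [Set.not_nonempty_iff_eq_empty] at hne
    have : M = 0 := by rw [hM, mu_eq, hne, Nat.sInf_empty]
    omega
  have hMmem : M ∈ muSet D Z1 Z2 Set.univ := by rw [hM, mu_eq]; exact Nat.sInf_mem hMne
  have hcomp : ∀ v : V, IsStrongComponent D (L (lvl v)) (compSet D (L (lvl v)) v) :=
    fun v => compSet_strong D (L (lvl v)) v (hlvlm v)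
  have hmuH : ∀ v : V, m ∈ muSet D Z1 Z2 (compSet D (L (lvl v)) v) ∧ 1 ≤ m := by
    intro v
    have hne : (muSet D Z1 Z2 (compSet D (L (lvl v)) v)).Nonempty :=
      ⟨M, muSet_mono D Z1 Z2 (Set.subset_univ _) hMmem⟩
    have hlt := hcon (lvl v) (hlvlp v) _ (hcomp v)
    have hpos : 1 ≤ mu D Z1 Z2 (compSet D (L (lvl v)) v) := mu_pos D Z1 Z2 ⟨v0⟩ hne
    have hle : mu D Z1 Z2 (compSet D (L (lvl v)) v) ≤ m := by omega
    have hk : mu D Z1 Z2 (compSet D (L (lvl v)) v) ∈ muSet D Z1 Z2 (compSet D (L (lvl v)) v) :=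
      Nat.sInf_mem hne
    exact ⟨muSet_upclosed D Z1 Z2 hk hle, le_trans hpos hle⟩
  have hm1 : 0 < m := (hmuH v0).2
  have h2m : 2 * m ∈ muSet D Z1 Z2 Set.univ := by
    refine ⟨fun v => ⟨(lvl v % 2) * m + (pickCol D Z1 Z2 m hm1 (compSet D (L (lvl v)) v) v).val, by
      have h1 : lvl v % 2 = 0 ∨ lvl v % 2 = 1 := by omega
      have h2 := (pickCol D Z1 Z2 m hm1 (compSet D (L (lvl v)) v) v).isLt
      rcases h1 with h | h <;> rw [h] <;> omega⟩, fun j => ?_⟩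
    intro vs hcyc hmem
    obtain ⟨hne, hnd, harc⟩ := hcyc
    obtain ⟨u0, hu0⟩ := List.exists_mem_of_ne_nil vs hne
    have hpar : ∀ u ∈ vs, ∀ w ∈ vs, lvl u % 2 = lvl w % 2 ∧
        (pickCol D Z1 Z2 m hm1 (compSet D (L (lvl u)) u) u : ℕ) =
        (pickCol D Z1 Z2 m hm1 (compSet D (L (lvl w)) w) w : ℕ) := by
      intro u hu w hw
      have h1u : _ = j := (hmem u hu).2
      have h1w : _ = j := (hmem w hw).2
      have h2 : (lvl u % 2) * m + (pickCol D Z1 Z2 m hm1 (compSet D (L (lvl u)) u) u : ℕ) =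
          (lvl w % 2) * m + (pickCol D Z1 Z2 m hm1 (compSet D (L (lvl w)) w) w : ℕ) :=
        congrArg Fin.val (h1u.trans h1w.symm)
      have hbu := (pickCol D Z1 Z2 m hm1 (compSet D (L (lvl u)) u) u).isLt
      have hbw := (pickCol D Z1 Z2 m hm1 (compSet D (L (lvl w)) w) w).isLt
      have hau : lvl u % 2 = 0 ∨ lvl u % 2 = 1 := by omega
      have haw : lvl w % 2 = 0 ∨ lvl w % 2 = 1 := by omega
      rcases hau with h | h <;> rcases haw with h' | h' <;>
        rw [h, h'] at h2 ⊢ <;> omega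
    have hvsmem : ∀ k (hk : k < vs.length), (vs[k]'hk) ∈ vs := fun k hk => List.getElem_mem hk
    have harc' : ∀ k c (hk : k < vs.length) (hc : c < vs.length), (k + 1) % vs.length = c →
        D (vs[k]'hk) (vs[c]'hc) :=
      fun k c hk hc hkc => harc _ (cycleArcs_getElem vs k c hk hc hkc)
    have hconst : ∀ u ∈ vs, ∀ w ∈ vs, lvl u = lvl w := by
      rcases hstep with hout | hin
      · have hmono := cycle_rel (r := fun a b => lvl b ≤ lvl a) (vs := vs) (fun a => le_refl _)
          (fun {a b c} hab hbc => le_trans hbc hab) (fun k c hk hc hkc => by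
            have hD := harc' k c hk hc hkc
            have hle := hout _ _ _ _ hD (hlvlm _) (hlvlm _) (hlvlp _) (hlvlp _)
            have hp := (hpar _ (hvsmem k hk) _ (hvsmem c hc)).1
            omega)
        intro u hu w hw
        exact le_antisymm (hmono w hw u hu) (hmono u hu w hw)
      · have hmono := cycle_rel (r := fun a b => lvl a ≤ lvl b) (vs := vs) (fun a => le_refl _)
          (fun {a b c} hab hbc => le_trans hab hbc) (fun k c hk hc hkc => by
            have hD := harc' k c hk hc hkc
            have hle := hin _ _ _ _ hD (hlvlm _) (hlvlm _) (hlvlp _) (hlvlp _)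
            have hp := (hpar _ (hvsmem k hk) _ (hvsmem c hc)).1
            omega)
        intro u hu w hw
        exact le_antisymm (hmono u hu w hw) (hmono w hw u hu)
    have hvsS : ∀ u ∈ vs, u ∈ L (lvl u0) := by
      intro u hu
      rw [← hconst u hu u0 hu0]
      exact hlvlm u
    have hreach : ∀ u ∈ vs, ∀ w ∈ vs,
        Relation.ReflTransGen (inducedRel D (L (lvl u0))) u w := by
      refine cycle_rel (fun a => .refl) (fun {a b c} h1 h2 => h1.trans h2) ?_
      intro k c hk hc hkc
      exact Relation.ReflTransGen.single
        ⟨harc' k c hk hc hkc, hvsS _ (hvsmem k hk), hvsS _ (hvsmem c hc)⟩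
    have hcompeq : ∀ u ∈ vs, compSet D (L (lvl u)) u = compSet D (L (lvl u0)) u0 := by
      intro u hu
      rw [hconst u hu u0 hu0]
      exact compSet_eq D _ (hreach u hu u0 hu0) (hreach u0 hu0 u hu)
    have hmH0 : m ∈ muSet D Z1 Z2 (compSet D (L (lvl u0)) u0) := (hmuH u0).1
    have hin : ∀ u ∈ vs, u ∈ compSet D (L (lvl u0)) u0 ∩
        {w | pickCol D Z1 Z2 m hm1 (compSet D (L (lvl u0)) u0) w =
          pickCol D Z1 Z2 m hm1 (compSet D (L (lvl u0)) u0) u0} := by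
      intro u hu
      refine ⟨⟨hreach u0 hu0 u hu, hreach u hu u0 hu0⟩, ?_⟩
      have h1 := (hpar u hu u0 hu0).2
      rw [hcompeq u hu] at h1
      exact Fin.val_injective h1
    exact pickCol_spec D Z1 Z2 hm1 hmH0 _ vs ⟨hne, hnd, harc⟩ hin
  have hfin : M ≤ 2 * m := by rw [hM, mu_eq]; exact Nat.sInf_le h2m
  omega
end

section
/- Let D be a strongly connected digraph and Z₁, Z₂ ⊆ A(D). If μ(D,Z₁,Z₂) ≥ 1536, then D contains a directed cycle containing at least two arcs in the symmetric difference Z₁ Δ Z₂. -/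
variable {V : Type}

/-! ### Auxiliary machinery -/

section AuxDefs

open Classical in
/-- Weight of an arc: `-1` on `W`, `+1` otherwise. -/
noncomputable def wtArc (W : Set (V × V)) (a : V × V) : ℤ := if a ∈ W then -1 else 1

/-- Weight of a path. -/
noncomputable def pweight (W : Set (V × V)) (l : List V) : ℤ :=
  ((pathArcs l).map (wtArc W)).sum

/-- Simple directed path from `r` to `x`. -/
def IsSP (D : V → V → Prop) (r x : V) (l : List V) : Prop :=
  l.Nodup ∧ l.Chain' D ∧ l.head? = some r ∧ l.getLast? = some x

end AuxDefs

section AuxLemmas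

lemma wtArc_le_one (W : Set (V × V)) (a : V × V) : wtArc W a ≤ 1 := by
  unfold wtArc; split <;> omega

lemma wtArc_of_mem {W : Set (V × V)} {a : V × V} (h : a ∈ W) : wtArc W a = -1 := by
  unfold wtArc; simp [h]

lemma wtArc_of_not_mem {W : Set (V × V)} {a : V × V} (h : a ∉ W) : wtArc W a = 1 := by
  unfold wtArc; simp [h]

lemma pathArcs_nil : pathArcs ([] : List V) = [] := rfl
lemma pathArcs_single (a : V) : pathArcs [a] = [] := rfl
lemma pathArcs_cons₂ (a b : V) (l : List V) :
    pathArcs (a :: b :: l) = (a, b) :: pathArcs (b :: l) := rfl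

lemma zip_concat_eq : ∀ (l : List V) (c b : V),
    (c :: l).zip (l ++ [b]) = (c :: l).zip l ++ [((c :: l).getLast (by simp), b)]
  | [], c, b => by simp
  | d :: l', c, b => by
      have ih := zip_concat_eq l' d b
      simp only [List.cons_append, List.zip_cons_cons] at *
      rw [ih]
      simp [List.getLast]

lemma cycleArcs_cons (a : V) (l : List V) :
    cycleArcs (a :: l) = pathArcs (a :: l) ++ [((a :: l).getLast (by simp), a)] := by
  have h1 : (a :: l).rotate 1 = l ++ [a] := by
    rw [List.rotate_cons_succ, List.rotate_zero]
  unfold cycleArcs pathArcs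
  rw [h1]
  simpa using zip_concat_eq l a a

lemma chain'_pathArcs {D : V → V → Prop} :
    ∀ {l : List V}, l.Chain' D → ∀ p ∈ pathArcs l, D p.1 p.2
  | [], _, p, hp => by simp [pathArcs_nil] at hp
  | [a], _, p, hp => by simp [pathArcs_single] at hp
  | a :: b :: l, h, p, hp => by
      rw [pathArcs_cons₂] at hp
      rcases List.mem_cons.mp hp with h1 | h1
      · subst h1; exact (List.isChain_cons_cons.mp h).1
      · exact chain'_pathArcs (List.isChain_cons_cons.mp h).2 p h1

lemma pathArcs_concat : ∀ (l : List V) (h : l ≠ []) (y : V),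
    pathArcs (l ++ [y]) = pathArcs l ++ [(l.getLast h, y)]
  | [], h, y => absurd rfl h
  | [a], _, y => by simp [pathArcs_cons₂, pathArcs_single]
  | a :: b :: l, _, y => by
      have ih := pathArcs_concat (b :: l) (by simp) y
      simp only [List.cons_append] at *
      rw [pathArcs_cons₂, pathArcs_cons₂, ih]
      simp [List.getLast]

lemma pathArcs_split : ∀ (A : List V) (y : V) (B : List V),
    pathArcs (A ++ y :: B) = pathArcs (A ++ [y]) ++ pathArcs (y :: B)
  | [], y, B => by simp [pathArcs_single]
  | [a], y, B => by simp [pathArcs_cons₂, pathArcs_single]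
  | a :: b :: A, y, B => by
      have ih := pathArcs_split (b :: A) y B
      simp only [List.cons_append] at *
      rw [pathArcs_cons₂, pathArcs_cons₂, ih]
      rfl

lemma sum_map_sub {α : Type*} (l : List α) (f g : α → ℤ) :
    (l.map (fun a => f a - g a)).sum = (l.map f).sum - (l.map g).sum := by
  induction l with
  | nil => simp
  | cons a l ih => simp [ih]; ring

lemma sum_nonpos' : ∀ (l : List ℤ), (∀ z ∈ l, z ≤ 0) → l.sum ≤ 0
  | [], _ => by simp
  | a :: l, h => by
      have := sum_nonpos' l (fun z hz => h z (List.mem_cons_of_mem a hz))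
      have ha := h a (List.mem_cons_self)
      simp only [List.sum_cons]; omega

lemma sum_wt_eq_length {W : Set (V × V)} :
    ∀ (L : List (V × V)), (∀ p ∈ L, p ∉ W) → (L.map (wtArc W)).sum = L.length
  | [], _ => by simp
  | a :: L, h => by
      have := sum_wt_eq_length L (fun p hp => h p (List.mem_cons_of_mem a hp))
      simp only [List.map_cons, List.sum_cons, this, List.length_cons,
        wtArc_of_not_mem (h a (List.mem_cons_self))]
      push_cast; ring

lemma head?_concat_eq {l₁ l₂ : List V} {c r : V}
    (h : (l₁ ++ c :: l₂).head? = some r) : (l₁ ++ [c]).head? = some r := by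
  cases l₁ with
  | nil => simpa using h
  | cons a t => simpa using h

lemma exists_sp {D : V → V → Prop} {r x : V}
    (h : Relation.ReflTransGen (inducedRel D Set.univ) r x) :
    ∃ l, IsSP D r x l := by
  induction h with
  | refl => exact ⟨[r], by simp [IsSP]; exact List.isChain_singleton r⟩
  | @tail b c hab hbc ih =>
      obtain ⟨l, hnd, hch, hhd, hlast⟩ := ih
      have hDbc : D b c := hbc.1
      by_cases hc : c ∈ l
      · obtain ⟨l₁, l₂, rfl⟩ := List.append_of_mem hc
        have hre : l₁ ++ c :: l₂ = (l₁ ++ [c]) ++ l₂ := by simp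
        rw [hre] at hnd hch
        exact ⟨l₁ ++ [c], (List.nodup_append'.mp hnd).1,
          (List.isChain_append.mp hch).1, head?_concat_eq hhd, List.getLast?_concat⟩
      · have hlne : l ≠ [] := by rintro rfl; simp at hhd
        refine ⟨l ++ [c], ?_, ?_, ?_, List.getLast?_concat⟩
        · exact List.nodup_append'.mpr ⟨hnd, List.nodup_singleton c,
            by intro a ha hmem; simp at hmem; subst hmem; exact hc ha⟩
        · refine List.isChain_append.mpr ⟨hch, List.isChain_singleton c, ?_⟩
          intro z hz w hw
          simp only [List.head?_cons, Option.mem_def, Option.some.injEq] at hw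
          subst hw
          rw [hlast] at hz
          simp only [Option.mem_def, Option.some.injEq] at hz
          subst hz; exact hDbc
        · cases l with
          | nil => exact absurd rfl hlne
          | cons a t => simpa using hhd

lemma cycle_nonneg [Fintype V] {D : V → V → Prop} {W : Set (V × V)}
    (H2 : ∀ vs : List V, IsDicycle D vs → arcCount (cycleArcs vs) W ≤ 1)
    (hnl : ∀ v, D v v → (v, v) ∉ W)
    {y : V} {B : List V} (hnd : (y :: B).Nodup) (hch : (y :: B).Chain' D)
    {x : V} (hx : (y :: B).getLast (by simp) = x) (hxy : D x y) :
    0 ≤ pweight W (y :: B) + wtArc W (x, y) := by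
  set vs : List V := y :: B with hvs
  have hca : cycleArcs vs = pathArcs vs ++ [(x, y)] := by
    rw [cycleArcs_cons, hx]
  have hdc : IsDicycle D vs := by
    refine ⟨by simp [hvs], hnd, ?_⟩
    intro p hp
    rw [hca] at hp
    rcases List.mem_append.mp hp with h1 | h1
    · exact chain'_pathArcs hch p h1
    · simp at h1; subst h1; exact hxy
  have hle := H2 vs hdc
  have huniq : ∀ p ∈ cycleArcs vs, p ∈ W → ∀ q ∈ cycleArcs vs, q ∈ W → p = q := by
    intro p hp hpW q hq hqW
    by_contra hne
    have hnt : Nontrivial {a : V × V // a ∈ cycleArcs vs ∧ a ∈ W} :=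
      ⟨⟨p, hp, hpW⟩, ⟨q, hq, hqW⟩, by simp [hne]⟩
    have h2 : 1 < Nat.card {a : V × V // a ∈ cycleArcs vs ∧ a ∈ W} := Finite.one_lt_card
    unfold arcCount at hle
    omega
  have hndca : (cycleArcs vs).Nodup := by
    have hlen : vs.length ≤ (vs.rotate 1).length := by rw [List.length_rotate]
    have hmap : (cycleArcs vs).map Prod.fst = vs := List.map_fst_zip hlen
    exact List.Nodup.of_map Prod.fst (by rw [hmap]; exact hnd)
  have hgoal : 0 ≤ ((cycleArcs vs).map (wtArc W)).sum := by
    by_cases hW : ∃ p ∈ cycleArcs vs, p ∈ W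
    · obtain ⟨p₀, hp₀, hp₀W⟩ := hW
      obtain ⟨s, t, hst⟩ := List.append_of_mem hp₀
      have hnd2 : (s ++ p₀ :: t).Nodup := hst ▸ hndca
      rw [List.nodup_append'] at hnd2
      have hps : p₀ ∉ s := fun hmem => hnd2.2.2 hmem List.mem_cons_self
      have hpt : p₀ ∉ t := (List.nodup_cons.mp hnd2.2.1).1
      have hsW : ∀ p ∈ s, p ∉ W := by
        intro p hpmem hpW
        have heq : p = p₀ := huniq p (by rw [hst]; exact List.mem_append_left _ hpmem) hpW
          p₀ hp₀ hp₀W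
        exact hps (heq ▸ hpmem)
      have htW : ∀ p ∈ t, p ∉ W := by
        intro p hpmem hpW
        have heq : p = p₀ := huniq p
          (by rw [hst]; exact List.mem_append_right _ (List.mem_cons_of_mem _ hpmem)) hpW
          p₀ hp₀ hp₀W
        exact hpt (heq ▸ hpmem)
      have hlen2 : 1 ≤ s.length + t.length := by
        by_contra hcon
        push_neg at hcon
        have hs0 : s = [] := List.length_eq_zero_iff.mp (by omega)
        have ht0 : t = [] := List.length_eq_zero_iff.mp (by omega)
        subst hs0; subst ht0
        simp only [List.nil_append] at hst
        rw [hca] at hst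
        have hpa : pathArcs vs = [] ∧ (x, y) = p₀ := by
          cases hpa' : pathArcs vs with
          | nil => rw [hpa'] at hst; simp at hst; exact ⟨rfl, hst⟩
          | cons a l =>
              rw [hpa'] at hst
              have hl1 : (a :: l ++ [(x,y)]).length = 1 := by rw [hst]; simp
              simp at hl1
        have hB : B = [] := by
          cases B with
          | nil => rfl
          | cons b B' => rw [hvs, pathArcs_cons₂] at hpa; exact absurd hpa.1 (by simp)
        subst hB
        have hyx : y = x := by simpa [hvs] using hx
        subst hyx
        have hWm : (y, y) ∈ W := by rw [hpa.2]; exact hp₀W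
        exact hnl y hxy hWm
      calc (0:ℤ) ≤ (s.length : ℤ) + t.length - 1 := by
            have hcast : (1:ℤ) ≤ (s.length : ℤ) + t.length := by exact_mod_cast hlen2
            omega
        _ = ((s.map (wtArc W)).sum + wtArc W p₀ + (t.map (wtArc W)).sum) := by
            rw [sum_wt_eq_length s hsW, sum_wt_eq_length t htW, wtArc_of_mem hp₀W]
            ring
        _ = ((cycleArcs vs).map (wtArc W)).sum := by
            rw [hst]; simp [List.sum_append]; ring
    · push_neg at hW
      rw [sum_wt_eq_length _ hW]
      positivity
  rw [hca] at hgoal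
  simpa [pweight, List.sum_append] using hgoal


lemma sum_wt_ge_neg_length {W : Set (V × V)} :
    ∀ (L : List (V × V)), -(L.length : ℤ) ≤ (L.map (wtArc W)).sum
  | [] => by simp
  | a :: L => by
      have ih := sum_wt_ge_neg_length (W := W) L
      have ha : -1 ≤ wtArc W a := by unfold wtArc; split <;> omega
      simp only [List.map_cons, List.sum_cons, List.length_cons]
      push_cast
      omega

end AuxLemmas

/-- If `D` is strongly connected and `μ(D,Z₁,Z₂) ≥ 1536`, then `D` contains
a directed cycle with at least two arcs in the symmetric difference `Z₁ Δ Z₂`. -/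
theorem stmt9 [Fintype V] (D : V → V → Prop) (Z1 Z2 : Set (V × V))
    (hsc : StronglyConnectedOn D Set.univ) (hmu : 1536 ≤ mu D Z1 Z2 Set.univ) :
    ∃ vs : List V, IsDicycle D vs ∧
      2 ≤ arcCount (cycleArcs vs) ((Z1 \ Z2) ∪ (Z2 \ Z1)) := by
  classical
  by_contra hgoal
  push_neg at hgoal
  set W : Set (V × V) := (Z1 \ Z2) ∪ (Z2 \ Z1) with hWdef
  clear_value W
  have H2 : ∀ vs : List V, IsDicycle D vs → arcCount (cycleArcs vs) W ≤ 1 := by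
    intro vs hvs
    have := hgoal vs hvs
    omega
  unfold mu at hmu
  cases isEmpty_or_nonempty V with
  | inl hVempty =>
      have h0 : 0 ∈ {k | ∃ c : V → Fin k,
          ∀ i : Fin k, NoUnbCycle D Z1 Z2 (Set.univ ∩ {v | c v = i})} :=
        ⟨fun v => (hVempty.elim v), fun i => i.elim0⟩
      exact absurd (hmu.trans (Nat.sInf_le h0)) (by norm_num)
  | inr hVne =>
  by_cases hloop : ∃ v, D v v ∧ (v, v) ∈ W
  · -- Case A : a W-loop exists, no colouring can ever work.
    obtain ⟨v, hvv, hvW⟩ := hloop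
    rw [hWdef] at hvW
    have hcaeq : cycleArcs [v] = [(v, v)] := by
      rw [cycleArcs_cons]; simp [pathArcs_single]
    have hcyc : IsDicycle D [v] := by
      refine ⟨by simp, by simp, ?_⟩
      intro p hp
      rw [hcaeq] at hp
      simp at hp
      subst hp
      exact hvv
    have h1 : ∀ (Z : Set (V × V)), (v, v) ∈ Z → arcCount [((v, v) : V × V)] Z = 1 := by
      intro Z hz
      unfold arcCount
      rw [Nat.card_eq_one_iff_unique]
      refine ⟨⟨?_⟩, ⟨⟨(v, v), by simp, hz⟩⟩⟩
      rintro ⟨a, ha, _⟩ ⟨b, hb, _⟩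
      simp at ha hb
      subst ha; subst hb; rfl
    have h0 : ∀ (Z : Set (V × V)), (v, v) ∉ Z → arcCount [((v, v) : V × V)] Z = 0 := by
      intro Z hz
      unfold arcCount
      have : IsEmpty {a : V × V // a ∈ [((v, v) : V × V)] ∧ a ∈ Z} := by
        refine ⟨?_⟩
        rintro ⟨a, ha, haZ⟩
        simp at ha
        subst ha
        exact hz haZ
      exact Nat.card_of_isEmpty
    have hunb : Unbalanced Z1 Z2 [v] := by
      unfold Unbalanced
      rw [hcaeq]
      rcases hvW with h | h
      · rw [h1 Z1 h.1, h0 Z2 h.2]; exact one_ne_zero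
      · rw [h0 Z1 h.2, h1 Z2 h.1]; exact zero_ne_one
    have hempty : {k | ∃ c : V → Fin k,
        ∀ i : Fin k, NoUnbCycle D Z1 Z2 (Set.univ ∩ {v | c v = i})} = ∅ := by
      ext k
      simp only [Set.mem_setOf_eq, Set.mem_empty_iff_false, iff_false]
      rintro ⟨c, hcol⟩
      exact hcol (c v) [v] hcyc
        (by intro u hu; simp at hu; subst hu; exact ⟨trivial, rfl⟩) hunb
    rw [hempty, Nat.sInf_empty] at hmu
    exact absurd hmu (by norm_num)
  · -- Case B : no W-loop; build the potential.
    push_neg at hloop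
    have hfinal : (2 : ℕ) ∈ {k | ∃ c : V → Fin k,
        ∀ i : Fin k, NoUnbCycle D Z1 Z2 (Set.univ ∩ {v | c v = i})} → False := by
      intro h2mem
      exact absurd (hmu.trans (Nat.sInf_le h2mem)) (by norm_num)
    clear hmu
    obtain ⟨r⟩ := hVne
    have hSS : ∀ x, ∃ T : Set ℤ, T = {z | ∃ l, IsSP D r x l ∧ pweight W l = z} := fun x => ⟨_, rfl⟩
    set S : V → Set ℤ := fun x => {z | ∃ l, IsSP D r x l ∧ pweight W l = z} with hSdef
    have hne : ∀ x, (S x).Nonempty := by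
      intro x
      obtain ⟨l, hl⟩ := exists_sp (hsc r trivial x trivial)
      exact ⟨pweight W l, l, hl, rfl⟩
    have hbdd : ∀ x, BddBelow (S x) := by
      intro x
      refine ⟨-(Fintype.card V : ℤ), ?_⟩
      rintro z ⟨l, ⟨hnd, _, _, _⟩, rfl⟩
      have h1 : (pathArcs l).length ≤ l.length := by
        unfold pathArcs
        rw [List.length_zip]
        omega
      have h2 : l.length ≤ Fintype.card V := hnd.length_le_card
      have h3 := sum_wt_ge_neg_length (W := W) (pathArcs l)
      unfold pweight
      have : ((pathArcs l).length : ℤ) ≤ (Fintype.card V : ℤ) := by exact_mod_cast h1.trans h2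
      omega
    set φ : V → ℤ := fun x => sInf (S x) with hφdef
    have hφmem : ∀ x, ∃ l, IsSP D r x l ∧ pweight W l = φ x :=
      fun x => Int.csInf_mem (hne x) (hbdd x)
    have hφle : ∀ y (l : List V), IsSP D r y l → φ y ≤ pweight W l :=
      fun y l hl => csInf_le (hbdd y) ⟨l, hl, rfl⟩
    clear_value φ
    have key : ∀ x y, D x y → φ y ≤ φ x + wtArc W (x, y) := by
      intro x y hxy
      obtain ⟨l, ⟨hnd, hch, hhd, hlast⟩, hwl⟩ := hφmem x
      have hlne : l ≠ [] := by rintro rfl; simp at hhd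
      by_cases hy : y ∈ l
      · obtain ⟨l₁, l₂, rfl⟩ := List.append_of_mem hy
        have hnd' : ((l₁ ++ [y]) ++ l₂).Nodup := by simpa using hnd
        have hch' : List.Chain' D ((l₁ ++ [y]) ++ l₂) := by simpa using hch
        have hsp1 : IsSP D r y (l₁ ++ [y]) :=
          ⟨(List.nodup_append'.mp hnd').1, (List.isChain_append.mp hch').1,
            head?_concat_eq hhd, List.getLast?_concat⟩
        have hy2 : φ y ≤ pweight W (l₁ ++ [y]) := hφle y _ hsp1
        have hsplit : pweight W (l₁ ++ y :: l₂) =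
            pweight W (l₁ ++ [y]) + pweight W (y :: l₂) := by
          unfold pweight
          rw [pathArcs_split]
          simp [List.sum_append]
        have hlast2 : (y :: l₂).getLast (by simp) = x := by
          have h3 : (l₁ ++ y :: l₂).getLast? = (y :: l₂).getLast? := by
            rw [List.getLast?_append]
            rw [List.getLast?_eq_getLast (l := y :: l₂) (by simp)]
            rfl
          rw [h3, List.getLast?_eq_getLast (l := y :: l₂) (by simp)] at hlast
          exact Option.some.inj hlast
        have hnd3 : (y :: l₂).Nodup := (List.nodup_append'.mp hnd).2.1
        have hch3 : (y :: l₂).Chain' D := (List.isChain_append.mp hch).2.1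
        have hc0 := cycle_nonneg H2 hloop hnd3 hch3 hlast2 hxy
        rw [hsplit] at hwl
        omega
      · have hlast' : l.getLast hlne = x := by
          rw [List.getLast?_eq_getLast (l := l) hlne] at hlast
          exact Option.some.inj hlast
        have hsp1 : IsSP D r y (l ++ [y]) := by
          refine ⟨?_, ?_, ?_, List.getLast?_concat⟩
          · exact List.nodup_append'.mpr ⟨hnd, List.nodup_singleton y,
              by intro a ha hmem; simp at hmem; subst hmem; exact hy ha⟩
          · refine List.isChain_append.mpr ⟨hch, List.isChain_singleton y, ?_⟩
            intro a ha b hb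
            simp only [List.head?_cons, Option.mem_def, Option.some.injEq] at hb
            subst hb
            rw [hlast] at ha
            simp only [Option.mem_def, Option.some.injEq] at ha
            subst ha
            exact hxy
          · cases l with
            | nil => exact absurd rfl hlne
            | cons a t => simpa using hhd
        have hwt : pweight W (l ++ [y]) = pweight W l + wtArc W (x, y) := by
          unfold pweight
          rw [pathArcs_concat l hlne y, hlast']
          simp [List.sum_append]
        have h4 : φ y ≤ pweight W (l ++ [y]) := hφle y _ hsp1
        omega
    -- the 2-colouring by parity of φ
    set c : V → Fin 2 := fun v => if Even (φ v) then 0 else 1 with hcdef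
    clear_value c
    have h2mem : (2 : ℕ) ∈ {k | ∃ c : V → Fin k,
        ∀ i : Fin k, NoUnbCycle D Z1 Z2 (Set.univ ∩ {v | c v = i})} := by
      refine ⟨c, ?_⟩
      intro i vs hvs hmem hunb
      have hmono : ∀ u ∈ vs, ∀ w ∈ vs, (Even (φ u) ↔ Even (φ w)) := by
        intro u hu w hw
        have hcu : c u = i := (hmem u hu).2
        have hcw : c w = i := (hmem w hw).2
        have hcc : c u = c w := hcu.trans hcw.symm
        by_cases e1 : Even (φ u) <;> by_cases e2 : Even (φ w) <;>
          simp [hcdef, e1, e2] at hcc ⊢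
      have hstep : ∀ p ∈ cycleArcs vs, φ p.2 - φ p.1 ≤ wtArc W p ∧
          Even (φ p.2 - φ p.1) := by
        intro p hp
        obtain ⟨a, b⟩ := p
        show φ b - φ a ≤ wtArc W (a, b) ∧ Even (φ b - φ a)
        have hmem2 := List.of_mem_zip (l₁ := vs) (l₂ := vs.rotate 1) hp
        have ha : a ∈ vs := hmem2.1
        have hb : b ∈ vs := List.mem_rotate.mp hmem2.2
        have harc : D a b := hvs.2.2 (a, b) hp
        refine ⟨?_, Int.even_sub.mpr (hmono b hb a ha)⟩
        have := key a b harc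
        omega
      have hsum : ((cycleArcs vs).map (fun p => φ p.2 - φ p.1)).sum = 0 := by
        have e1 : ((cycleArcs vs).map (fun p => φ p.2 - φ p.1)).sum =
            ((cycleArcs vs).map (fun p => φ p.2)).sum -
              ((cycleArcs vs).map (fun p => φ p.1)).sum :=
          sum_map_sub (cycleArcs vs) (fun p => φ p.2) (fun p => φ p.1)
        have hlen1 : (vs.rotate 1).length ≤ vs.length := by rw [List.length_rotate]
        have hlen2 : vs.length ≤ (vs.rotate 1).length := by rw [List.length_rotate]
        have e2 : (cycleArcs vs).map (fun p => φ p.2) = (vs.rotate 1).map φ := by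
          unfold cycleArcs
          rw [show (fun p : V × V => φ p.2) = φ ∘ Prod.snd from rfl, ← List.map_map,
            List.map_snd_zip hlen1]
        have e3 : (cycleArcs vs).map (fun p => φ p.1) = vs.map φ := by
          unfold cycleArcs
          rw [show (fun p : V × V => φ p.1) = φ ∘ Prod.fst from rfl, ← List.map_map,
            List.map_fst_zip hlen2]
        have e4 : ((vs.rotate 1).map φ).sum = (vs.map φ).sum :=
          ((List.rotate_perm vs 1).map φ).sum_eq
        rw [e1, e2, e3, e4]
        ring
      have hnoW : ∀ p ∈ cycleArcs vs, p ∉ W := by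
        by_contra hcon
        push_neg at hcon
        obtain ⟨p₀, hp₀, hp₀W⟩ := hcon
        obtain ⟨s, t, hst⟩ := List.append_of_mem hp₀
        have hnps : (s.map (fun p => φ p.2 - φ p.1)).sum ≤ 0 := by
          apply sum_nonpos'
          intro z hz
          obtain ⟨p, hpmem, rfl⟩ := List.mem_map.mp hz
          have hpca : p ∈ cycleArcs vs := by rw [hst]; exact List.mem_append_left _ hpmem
          obtain ⟨hle, heven⟩ := hstep p hpca
          have := wtArc_le_one W p
          obtain ⟨m, hm⟩ := heven
          omega
        have hnpt : (t.map (fun p => φ p.2 - φ p.1)).sum ≤ 0 := by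
          apply sum_nonpos'
          intro z hz
          obtain ⟨p, hpmem, rfl⟩ := List.mem_map.mp hz
          have hpca : p ∈ cycleArcs vs := by
            rw [hst]; exact List.mem_append_right _ (List.mem_cons_of_mem _ hpmem)
          obtain ⟨hle, heven⟩ := hstep p hpca
          have := wtArc_le_one W p
          obtain ⟨m, hm⟩ := heven
          omega
        have hp0le : φ p₀.2 - φ p₀.1 ≤ -1 := by
          have hle := (hstep p₀ hp₀).1
          rw [wtArc_of_mem hp₀W] at hle
          exact hle
        rw [hst] at hsum
        simp only [List.map_append, List.map_cons, List.sum_append, List.sum_cons] at hsum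
        omega
      -- the cycle is balanced : contradiction with hunb
      apply hunb
      unfold arcCount
      apply Nat.card_congr
      apply Equiv.subtypeEquivRight
      intro a
      constructor
      · rintro ⟨hamem, haZ⟩
        refine ⟨hamem, ?_⟩
        by_contra haZ2
        exact hnoW a hamem (by rw [hWdef]; exact Or.inl ⟨haZ, haZ2⟩)
      · rintro ⟨hamem, haZ⟩
        refine ⟨hamem, ?_⟩
        by_contra haZ1
        exact hnoW a hamem (by rw [hWdef]; exact Or.inr ⟨haZ, haZ1⟩)
    exact hfinal h2mem
end
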